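/- Invertibility of &R in DAf: for all types A and B of equal sort and any configuration Δ, if the unfocused sequent Δ ⊢w A&B is derivable in the weakly focalised calculus DAf, then both Δ ⊢w A and Δ ⊢w B are derivable in DAf. -/
import Mathlib


/-!
Formalisation of the displacement calculus with additives DA, the weakly
focalised calculus DAf (with and without Cut) and the strongly focalised
calculus DAFoc, following Morrill–Valentín.
-/

namespace DA

/-- Bias of atomic types. -/
inductive Bias : Type where
  | pos
  | neg
deriving DecidableEq

/-- Types of the displacement calculus with additives, indexed by their sort. -/
inductive Ty : ℕ → Type where
  | atom (b : Bias) (name : ℕ) (i : ℕ) : Ty i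
  | over {i j : ℕ} : Ty (i + j) → Ty j → Ty i                                   -- C / B
  | under {i j : ℕ} : Ty i → Ty (i + j) → Ty j                                  -- A \ C
  | prod {i j : ℕ} : Ty i → Ty j → Ty (i + j)                                   -- A • B
  | unitI : Ty 0                                                                -- I
  | circ {i j : ℕ} (k : ℕ) (hk : 1 ≤ k ∧ k ≤ i + 1) : Ty (i + j) → Ty j → Ty (i + 1)   -- C ↑ₖ B
  | infx {i j : ℕ} (k : ℕ) (hk : 1 ≤ k ∧ k ≤ i + 1) : Ty (i + 1) → Ty (i + j) → Ty j   -- A ↓ₖ C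
  | wprod {i j : ℕ} (k : ℕ) (hk : 1 ≤ k ∧ k ≤ i + 1) : Ty (i + 1) → Ty j → Ty (i + j)  -- A ⊙ₖ B
  | unitJ : Ty 1                                                                -- J
  | amp {i : ℕ} : Ty i → Ty i → Ty i                                            -- A & B
  | oplus {i : ℕ} : Ty i → Ty i → Ty i                                          -- A ⊕ B

/-- `posb A = true` iff `A` is synchronous as an output (positive output /
asynchronous as an input): positive atoms and `•`, `I`, `⊙ₖ`, `J`, `⊕`.
Otherwise `A` is synchronous as an input (negative atoms and `/`, `\`, `↑ₖ`,
`↓ₖ`, `&`). -/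
def posb {i : ℕ} : Ty i → Bool
  | .atom .pos _ _ => true
  | .atom .neg _ _ => false
  | .over _ _ => false
  | .under _ _ => false
  | .prod _ _ => true
  | .unitI => true
  | .circ _ _ _ _ => false
  | .infx _ _ _ _ => false
  | .wprod _ _ _ _ => true
  | .unitJ => true
  | .amp _ _ => false
  | .oplus _ _ => true

def isAtom {i : ℕ} : Ty i → Bool
  | .atom _ _ _ => true
  | _ => false

/-- Elements of configurations: the separator `1`, types of sort 0, and
figures `A{Δ₁ : … : Δ_{sA}}` of types of sort `> 0`; together with *boxed*
(focalised) variants of the latter two, used by the focalised calculi. -/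
inductive BTree : Type where
  | sep : BTree
  | type0 : Ty 0 → BTree
  | btype0 : Ty 0 → BTree
  | fig {i : ℕ} : Ty (i + 1) → (Fin (i + 1) → List BTree) → BTree
  | bfig {i : ℕ} : Ty (i + 1) → (Fin (i + 1) → List BTree) → BTree

/-- Configurations (possibly containing boxed, i.e. focalised, occurrences). -/
abbrev BConfig := List BTree

/-- The figure `vec(A)` of a type `A`. -/
def vecT {i : ℕ} (A : Ty i) : BTree :=
  match i, A with
  | 0, A => .type0 A
  | _ + 1, A => .fig A (fun _ => [BTree.sep])

def vec {i : ℕ} (A : Ty i) : BConfig := [vecT A]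

/-- The boxed (focalised) figure `[vec(A)]` of a type `A`. -/
def bvecT {i : ℕ} (A : Ty i) : BTree :=
  match i, A with
  | 0, A => .btype0 A
  | _ + 1, A => .bfig A (fun _ => [BTree.sep])

def bvec {i : ℕ} (A : Ty i) : BConfig := [bvecT A]

/-- The premise occurrence of an active antecedent subformula in a synchronous
rule: focalised (boxed) if it is synchronous in the antecedent (negative),
unfocalised if asynchronous (positive). -/
def fvec {i : ℕ} (A : Ty i) : BConfig := if posb A then vec A else bvec A

/-! Sort of a tree / configuration: its number of separators. -/
mutual
  inductive TreeSort : BTree → ℕ → Prop where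
    | sep : TreeSort .sep 1
    | type0 (A : Ty 0) : TreeSort (.type0 A) 0
    | btype0 (A : Ty 0) : TreeSort (.btype0 A) 0
    | fig {i : ℕ} (A : Ty (i + 1)) (args : Fin (i + 1) → BConfig) (ns : Fin (i + 1) → ℕ) :
        (∀ k, ConfigSort (args k) (ns k)) → TreeSort (.fig A args) (Finset.univ.sum ns)
    | bfig {i : ℕ} (A : Ty (i + 1)) (args : Fin (i + 1) → BConfig) (ns : Fin (i + 1) → ℕ) :
        (∀ k, ConfigSort (args k) (ns k)) → TreeSort (.bfig A args) (Finset.univ.sum ns)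
  inductive ConfigSort : BConfig → ℕ → Prop where
    | nil : ConfigSort [] 0
    | cons {t : BTree} {ts : BConfig} {n m : ℕ} :
        TreeSort t n → ConfigSort ts m → ConfigSort (t :: ts) (n + m)
end

/-! Number of boxed (focalised) formula occurrences in a tree / configuration. -/
mutual
  inductive TBoxes : BTree → ℕ → Prop where
    | sep : TBoxes .sep 0
    | type0 (A : Ty 0) : TBoxes (.type0 A) 0
    | btype0 (A : Ty 0) : TBoxes (.btype0 A) 1
    | fig {i : ℕ} (A : Ty (i + 1)) (args : Fin (i + 1) → BConfig) (ns : Fin (i + 1) → ℕ) :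
        (∀ k, CBoxes (args k) (ns k)) → TBoxes (.fig A args) (Finset.univ.sum ns)
    | bfig {i : ℕ} (A : Ty (i + 1)) (args : Fin (i + 1) → BConfig) (ns : Fin (i + 1) → ℕ) :
        (∀ k, CBoxes (args k) (ns k)) → TBoxes (.bfig A args) (Finset.univ.sum ns + 1)
  inductive CBoxes : BConfig → ℕ → Prop where
    | nil : CBoxes [] 0
    | cons {t : BTree} {ts : BConfig} {n m : ℕ} :
        TBoxes t n → CBoxes ts m → CBoxes (t :: ts) (n + m)
end

/-! The fold `Γ ⊗ ⟨Δ₁ : … : Δ_i⟩`: `FoldC Γ [Δ₁,…,Δ_i] res` holds iff `res` is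
the result of replacing the successive separators of `Γ` by `Δ₁,…,Δ_i`. -/
mutual
  inductive FoldT : BTree → List BConfig → BConfig → Prop where
    | sep (Δ : BConfig) : FoldT .sep [Δ] Δ
    | type0 (A : Ty 0) : FoldT (.type0 A) [] [.type0 A]
    | btype0 (A : Ty 0) : FoldT (.btype0 A) [] [.btype0 A]
    | fig {i : ℕ} (A : Ty (i + 1)) (args args' : Fin (i + 1) → BConfig)
        (reps : Fin (i + 1) → List BConfig) :
        (∀ k, FoldC (args k) (reps k) (args' k)) →
        FoldT (.fig A args) (List.ofFn reps).flatten [.fig A args']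
    | bfig {i : ℕ} (A : Ty (i + 1)) (args args' : Fin (i + 1) → BConfig)
        (reps : Fin (i + 1) → List BConfig) :
        (∀ k, FoldC (args k) (reps k) (args' k)) →
        FoldT (.bfig A args) (List.ofFn reps).flatten [.bfig A args']
  inductive FoldC : BConfig → List BConfig → BConfig → Prop where
    | nil : FoldC [] [] []
    | cons {t : BTree} {ts : BConfig} {r1 r2 : List BConfig} {c1 c2 : BConfig} :
        FoldT t r1 c1 → FoldC ts r2 c2 → FoldC (t :: ts) (r1 ++ r2) (c1 ++ c2)
end

/-- The `k`-th metalinguistic wrap `Δ |ₖ Γ`: `Wrap Δ k Γ res` holds iff `res`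
is the result of replacing the `k`-th separator of `Δ` by `Γ`. -/
def Wrap (Δ : BConfig) (k : ℕ) (Γ res : BConfig) : Prop :=
  ∃ n : ℕ, ConfigSort Δ n ∧
    FoldC Δ ((List.replicate n ([BTree.sep] : BConfig)).set (k - 1) Γ) res

/-! One-hole contexts `Δ₀(—)` for configurations: the hole is a configuration
position, either at the top level or nested inside a figure argument. -/
mutual
  inductive THole : Type where
    | fig {i : ℕ} (A : Ty (i + 1)) (args : Fin (i + 1) → BConfig) (k : Fin (i + 1))
        (c : CHole) : THole
    | bfig {i : ℕ} (A : Ty (i + 1)) (args : Fin (i + 1) → BConfig) (k : Fin (i + 1))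
        (c : CHole) : THole
  inductive CHole : Type where
    | top (pre post : BConfig) : CHole
    | deep (pre : BConfig) (t : THole) (post : BConfig) : CHole
end

/-! Plugging a configuration into a one-hole context. -/
mutual
  inductive PlugT : THole → BConfig → BTree → Prop where
    | fig {i : ℕ} (A : Ty (i + 1)) (args : Fin (i + 1) → BConfig) (k : Fin (i + 1))
        (c : CHole) (Γ plugged : BConfig) :
        PlugC c Γ plugged → PlugT (.fig A args k c) Γ (.fig A (Function.update args k plugged))
    | bfig {i : ℕ} (A : Ty (i + 1)) (args : Fin (i + 1) → BConfig) (k : Fin (i + 1))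
        (c : CHole) (Γ plugged : BConfig) :
        PlugC c Γ plugged → PlugT (.bfig A args k c) Γ (.bfig A (Function.update args k plugged))
  inductive PlugC : CHole → BConfig → BConfig → Prop where
    | top (pre post Γ : BConfig) : PlugC (.top pre post) Γ (pre ++ Γ ++ post)
    | deep (pre post Γ : BConfig) (t : THole) (tr : BTree) :
        PlugT t Γ tr → PlugC (.deep pre t post) Γ (pre ++ tr :: post)
end

/-- The data `Δ⟨—⟩ = Δ₀(— ⊗ ⟨Δ₁ : … : Δ_i⟩)` of a context in the generalised
sense of the displacement calculus. -/
structure Zone : Type where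
  hole : CHole
  reps : List BConfig

/-- `Sub Z Γ res` holds iff `res = Δ⟨Γ⟩` for the context `Δ⟨—⟩` given by `Z`,
i.e. `res = Δ₀(Γ ⊗ ⟨Δ₁ : … : Δ_i⟩)`. -/
def Sub (Z : Zone) (Γ res : BConfig) : Prop :=
  ∃ folded : BConfig, FoldC Γ Z.reps folded ∧ PlugC Z.hole folded res

/-- The displacement calculus with additives DA: `DADeriv Δ i A` is
derivability of the sequent `Δ ⇒ A` (identity axiom restricted to atoms). -/
inductive DADeriv : BConfig → ∀ i : ℕ, Ty i → Prop where
  | id (b : Bias) (name i : ℕ) :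
      DADeriv (vec (.atom b name i)) i (.atom b name i)
  | overR {i j : ℕ} {Γ : BConfig} {C : Ty (i + j)} {B : Ty j} :
      DADeriv (Γ ++ vec B) (i + j) C → DADeriv Γ i (.over C B)
  | overL {i j d : ℕ} {Γ s1 s2 : BConfig} {B : Ty j} {C : Ty (i + j)} {Z : Zone} {D : Ty d} :
      DADeriv Γ j B → Sub Z (vec C) s1 → DADeriv s1 d D →
      Sub Z (vec (.over C B) ++ Γ) s2 → DADeriv s2 d D
  | underR {i j : ℕ} {Γ : BConfig} {A : Ty i} {C : Ty (i + j)} :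
      DADeriv (vec A ++ Γ) (i + j) C → DADeriv Γ j (.under A C)
  | underL {i j d : ℕ} {Γ s1 s2 : BConfig} {A : Ty i} {C : Ty (i + j)} {Z : Zone} {D : Ty d} :
      DADeriv Γ i A → Sub Z (vec C) s1 → DADeriv s1 d D →
      Sub Z (Γ ++ vec (.under A C)) s2 → DADeriv s2 d D
  | prodR {i j : ℕ} {Γ1 Γ2 : BConfig} {A : Ty i} {B : Ty j} :
      DADeriv Γ1 i A → DADeriv Γ2 j B → DADeriv (Γ1 ++ Γ2) (i + j) (.prod A B)
  | prodL {i j d : ℕ} {s1 s2 : BConfig} {A : Ty i} {B : Ty j} {Z : Zone} {D : Ty d} :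
      Sub Z (vec A ++ vec B) s1 → DADeriv s1 d D →
      Sub Z (vec (.prod A B)) s2 → DADeriv s2 d D
  | unitIR : DADeriv [] 0 .unitI
  | unitIL {d : ℕ} {s1 s2 : BConfig} {Z : Zone} {D : Ty d} :
      Sub Z [] s1 → DADeriv s1 d D → Sub Z (vec .unitI) s2 → DADeriv s2 d D
  | circR {i j : ℕ} (k : ℕ) (hk : 1 ≤ k ∧ k ≤ i + 1) {Γ w : BConfig}
      {C : Ty (i + j)} {B : Ty j} :
      Wrap Γ k (vec B) w → DADeriv w (i + j) C → DADeriv Γ (i + 1) (.circ k hk C B)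
  | circL {i j d : ℕ} (k : ℕ) (hk : 1 ≤ k ∧ k ≤ i + 1) {Γ w s1 s2 : BConfig}
      {C : Ty (i + j)} {B : Ty j} {Z : Zone} {D : Ty d} :
      DADeriv Γ j B → Sub Z (vec C) s1 → DADeriv s1 d D →
      Wrap (vec (Ty.circ k hk C B)) k Γ w → Sub Z w s2 → DADeriv s2 d D
  | infxR {i j : ℕ} (k : ℕ) (hk : 1 ≤ k ∧ k ≤ i + 1) {Γ w : BConfig}
      {A : Ty (i + 1)} {C : Ty (i + j)} :
      Wrap (vec A) k Γ w → DADeriv w (i + j) C → DADeriv Γ j (.infx k hk A C)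
  | infxL {i j d : ℕ} (k : ℕ) (hk : 1 ≤ k ∧ k ≤ i + 1) {Γ w s1 s2 : BConfig}
      {A : Ty (i + 1)} {C : Ty (i + j)} {Z : Zone} {D : Ty d} :
      DADeriv Γ (i + 1) A → Sub Z (vec C) s1 → DADeriv s1 d D →
      Wrap Γ k (vec (Ty.infx k hk A C)) w → Sub Z w s2 → DADeriv s2 d D
  | wprodR {i j : ℕ} (k : ℕ) (hk : 1 ≤ k ∧ k ≤ i + 1) {Γ1 Γ2 w : BConfig}
      {A : Ty (i + 1)} {B : Ty j} :
      DADeriv Γ1 (i + 1) A → DADeriv Γ2 j B → Wrap Γ1 k Γ2 w →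
      DADeriv w (i + j) (.wprod k hk A B)
  | wprodL {i j d : ℕ} (k : ℕ) (hk : 1 ≤ k ∧ k ≤ i + 1) {w s1 s2 : BConfig}
      {A : Ty (i + 1)} {B : Ty j} {Z : Zone} {D : Ty d} :
      Wrap (vec A) k (vec B) w → Sub Z w s1 → DADeriv s1 d D →
      Sub Z (vec (.wprod k hk A B)) s2 → DADeriv s2 d D
  | unitJR : DADeriv [BTree.sep] 1 .unitJ
  | unitJL {d : ℕ} {s1 s2 : BConfig} {Z : Zone} {D : Ty d} :
      Sub Z [BTree.sep] s1 → DADeriv s1 d D → Sub Z (vec .unitJ) s2 → DADeriv s2 d D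
  | ampR {i : ℕ} {Γ : BConfig} {A B : Ty i} :
      DADeriv Γ i A → DADeriv Γ i B → DADeriv Γ i (.amp A B)
  | ampL1 {i d : ℕ} {s1 s2 : BConfig} {A B : Ty i} {Z : Zone} {D : Ty d} :
      Sub Z (vec A) s1 → DADeriv s1 d D → Sub Z (vec (.amp A B)) s2 → DADeriv s2 d D
  | ampL2 {i d : ℕ} {s1 s2 : BConfig} {A B : Ty i} {Z : Zone} {D : Ty d} :
      Sub Z (vec B) s1 → DADeriv s1 d D → Sub Z (vec (.amp A B)) s2 → DADeriv s2 d D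
  | oplusR1 {i : ℕ} {Γ : BConfig} {A B : Ty i} :
      DADeriv Γ i A → DADeriv Γ i (.oplus A B)
  | oplusR2 {i : ℕ} {Γ : BConfig} {A B : Ty i} :
      DADeriv Γ i B → DADeriv Γ i (.oplus A B)
  | oplusL {i d : ℕ} {s1 s2 s3 : BConfig} {A B : Ty i} {Z : Zone} {D : Ty d} :
      Sub Z (vec A) s1 → DADeriv s1 d D → Sub Z (vec B) s2 → DADeriv s2 d D →
      Sub Z (vec (.oplus A B)) s3 → DADeriv s3 d D

/-! Occurrence of a type satisfying `φ` somewhere in a configuration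
(as the head type of a tree/figure, possibly nested). -/
mutual
  inductive TOcc (φ : ∀ j : ℕ, Ty j → Prop) : BTree → Prop where
    | type0 {A : Ty 0} : φ 0 A → TOcc φ (.type0 A)
    | btype0 {A : Ty 0} : φ 0 A → TOcc φ (.btype0 A)
    | figHead {i : ℕ} {A : Ty (i + 1)} {args : Fin (i + 1) → BConfig} :
        φ (i + 1) A → TOcc φ (.fig A args)
    | bfigHead {i : ℕ} {A : Ty (i + 1)} {args : Fin (i + 1) → BConfig} :
        φ (i + 1) A → TOcc φ (.bfig A args)
    | figArg {i : ℕ} {A : Ty (i + 1)} {args : Fin (i + 1) → BConfig} (k : Fin (i + 1)) :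
        COcc φ (args k) → TOcc φ (.fig A args)
    | bfigArg {i : ℕ} {A : Ty (i + 1)} {args : Fin (i + 1) → BConfig} (k : Fin (i + 1)) :
        COcc φ (args k) → TOcc φ (.bfig A args)
  inductive COcc (φ : ∀ j : ℕ, Ty j → Prop) : BConfig → Prop where
    | head {t : BTree} {ts : BConfig} : TOcc φ t → COcc φ (t :: ts)
    | tail {t : BTree} {ts : BConfig} : COcc φ ts → COcc φ (t :: ts)
end

/-- The sequent `Δ ⊢ A` contains a complex (non-atomic) asynchronous formula
occurrence: a non-atomic positive type in the antecedent, or a non-atomic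
negative succedent. -/
def HasComplexAsync (Δ : BConfig) (i : ℕ) (A : Ty i) : Prop :=
  COcc (fun _ B => posb B = true ∧ isAtom B = false) Δ ∨
    (posb A = false ∧ isAtom A = false)

/-- A sequent (antecedent plus succedent-focus flag) contains at most one
focalised formula. -/
def AtMostOne (Δ : BConfig) (f : Bool) : Prop :=
  if f then CBoxes Δ 0 else (CBoxes Δ 0 ∨ CBoxes Δ 1)

/-- A sequent contains exactly one focalised formula. -/
def ExactlyOne (Δ : BConfig) (f : Bool) : Prop :=
  if f then CBoxes Δ 0 else CBoxes Δ 1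

/-- Side condition of the strongly focalised calculus: a sequent containing a
focalised formula contains no complex asynchronous formula occurrence (and
vice versa). -/
def Ok (strong : Bool) (Δ : BConfig) (f : Bool) (i : ℕ) (A : Ty i) : Prop :=
  strong = true → ¬ ((f = true ∨ ¬ CBoxes Δ 0) ∧ HasComplexAsync Δ i A)

/-- Focalised sequent calculus: `DW cuts strong Δ f i A` is derivability of
the sequent `Δ ⊢ A`, whose succedent is focalised iff `f = true` and whose
focalised antecedent formulas are the boxed occurrences of `Δ`.
`cuts = true` allows the Cut rules (weakly focalised calculus DAf);
`cuts = false` is Cut-free DAf; `strong = true` additionally imposes the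
strong focalisation discipline (DAFoc, taken with `cuts = false`). -/
inductive DW (cuts strong : Bool) : BConfig → Bool → ∀ i : ℕ, Ty i → Prop where
  -- identity axioms, restricted to atoms
  | idP (name i : ℕ) :
      DW cuts strong (vec (.atom .pos name i)) true i (.atom .pos name i)
  | idQ (name i : ℕ) :
      DW cuts strong (bvec (.atom .neg name i)) false i (.atom .neg name i)
  -- focusing rules
  | focR {i : ℕ} {Δ : BConfig} {P : Ty i} :
      posb P = true →
      DW cuts strong Δ true i P →
      AtMostOne Δ false → Ok strong Δ false i P →
      DW cuts strong Δ false i P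
  | focL {j d : ℕ} {Q : Ty j} {D : Ty d} {Z : Zone} {s1 s2 : BConfig} :
      posb Q = false →
      Sub Z (bvec Q) s1 → DW cuts strong s1 false d D →
      Sub Z (vec Q) s2 → AtMostOne s2 false → Ok strong s2 false d D →
      DW cuts strong s2 false d D
  -- asynchronous right rules
  | overR {i j : ℕ} {Γ : BConfig} {C : Ty (i + j)} {B : Ty j} :
      DW cuts strong (Γ ++ vec B) false (i + j) C →
      AtMostOne Γ false → Ok strong Γ false i (.over C B) →
      DW cuts strong Γ false i (.over C B)
  | underR {i j : ℕ} {Γ : BConfig} {A : Ty i} {C : Ty (i + j)} :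
      DW cuts strong (vec A ++ Γ) false (i + j) C →
      AtMostOne Γ false → Ok strong Γ false j (.under A C) →
      DW cuts strong Γ false j (.under A C)
  | circR {i j : ℕ} (k : ℕ) (hk : 1 ≤ k ∧ k ≤ i + 1) {Γ w : BConfig}
      {C : Ty (i + j)} {B : Ty j} :
      Wrap Γ k (vec B) w → DW cuts strong w false (i + j) C →
      AtMostOne Γ false → Ok strong Γ false (i + 1) (.circ k hk C B) →
      DW cuts strong Γ false (i + 1) (.circ k hk C B)
  | infxR {i j : ℕ} (k : ℕ) (hk : 1 ≤ k ∧ k ≤ i + 1) {Γ w : BConfig}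
      {A : Ty (i + 1)} {C : Ty (i + j)} :
      Wrap (vec A) k Γ w → DW cuts strong w false (i + j) C →
      AtMostOne Γ false → Ok strong Γ false j (.infx k hk A C) →
      DW cuts strong Γ false j (.infx k hk A C)
  | ampR {i : ℕ} {Γ : BConfig} {A B : Ty i} :
      DW cuts strong Γ false i A → DW cuts strong Γ false i B →
      AtMostOne Γ false → Ok strong Γ false i (.amp A B) →
      DW cuts strong Γ false i (.amp A B)
  -- asynchronous left rules
  | prodL {i j d : ℕ} {f : Bool} {s1 s2 : BConfig} {A : Ty i} {B : Ty j}
      {Z : Zone} {D : Ty d} :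
      Sub Z (vec A ++ vec B) s1 → DW cuts strong s1 f d D →
      Sub Z (vec (.prod A B)) s2 → AtMostOne s2 f → Ok strong s2 f d D →
      DW cuts strong s2 f d D
  | unitIL {d : ℕ} {f : Bool} {s1 s2 : BConfig} {Z : Zone} {D : Ty d} :
      Sub Z [] s1 → DW cuts strong s1 f d D →
      Sub Z (vec .unitI) s2 → AtMostOne s2 f → Ok strong s2 f d D →
      DW cuts strong s2 f d D
  | wprodL {i j d : ℕ} (k : ℕ) (hk : 1 ≤ k ∧ k ≤ i + 1) {f : Bool}
      {w s1 s2 : BConfig} {A : Ty (i + 1)} {B : Ty j} {Z : Zone} {D : Ty d} :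
      Wrap (vec A) k (vec B) w → Sub Z w s1 → DW cuts strong s1 f d D →
      Sub Z (vec (.wprod k hk A B)) s2 → AtMostOne s2 f → Ok strong s2 f d D →
      DW cuts strong s2 f d D
  | unitJL {d : ℕ} {f : Bool} {s1 s2 : BConfig} {Z : Zone} {D : Ty d} :
      Sub Z [BTree.sep] s1 → DW cuts strong s1 f d D →
      Sub Z (vec .unitJ) s2 → AtMostOne s2 f → Ok strong s2 f d D →
      DW cuts strong s2 f d D
  | oplusL {i d : ℕ} {f : Bool} {s1 s2 s3 : BConfig} {A B : Ty i} {Z : Zone} {D : Ty d} :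
      Sub Z (vec A) s1 → DW cuts strong s1 f d D →
      Sub Z (vec B) s2 → DW cuts strong s2 f d D →
      Sub Z (vec (.oplus A B)) s3 → AtMostOne s3 f → Ok strong s3 f d D →
      DW cuts strong s3 f d D
  -- synchronous left rules (active formula focalised)
  | overL {i j d : ℕ} {Γ s1 s2 : BConfig} {B : Ty j} {C : Ty (i + j)} {Z : Zone} {D : Ty d} :
      DW cuts strong Γ (posb B) j B →
      Sub Z (fvec C) s1 → DW cuts strong s1 false d D →
      Sub Z (bvec (.over C B) ++ Γ) s2 → AtMostOne s2 false → Ok strong s2 false d D →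
      DW cuts strong s2 false d D
  | underL {i j d : ℕ} {Γ s1 s2 : BConfig} {A : Ty i} {C : Ty (i + j)} {Z : Zone} {D : Ty d} :
      DW cuts strong Γ (posb A) i A →
      Sub Z (fvec C) s1 → DW cuts strong s1 false d D →
      Sub Z (Γ ++ bvec (.under A C)) s2 → AtMostOne s2 false → Ok strong s2 false d D →
      DW cuts strong s2 false d D
  | circL {i j d : ℕ} (k : ℕ) (hk : 1 ≤ k ∧ k ≤ i + 1) {Γ w s1 s2 : BConfig}
      {C : Ty (i + j)} {B : Ty j} {Z : Zone} {D : Ty d} :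
      DW cuts strong Γ (posb B) j B →
      Sub Z (fvec C) s1 → DW cuts strong s1 false d D →
      Wrap (bvec (Ty.circ k hk C B)) k Γ w → Sub Z w s2 →
      AtMostOne s2 false → Ok strong s2 false d D →
      DW cuts strong s2 false d D
  | infxL {i j d : ℕ} (k : ℕ) (hk : 1 ≤ k ∧ k ≤ i + 1) {Γ w s1 s2 : BConfig}
      {A : Ty (i + 1)} {C : Ty (i + j)} {Z : Zone} {D : Ty d} :
      DW cuts strong Γ (posb A) (i + 1) A →
      Sub Z (fvec C) s1 → DW cuts strong s1 false d D →
      Wrap Γ k (bvec (Ty.infx k hk A C)) w → Sub Z w s2 →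
      AtMostOne s2 false → Ok strong s2 false d D →
      DW cuts strong s2 false d D
  | ampL1 {i d : ℕ} {s1 s2 : BConfig} {A B : Ty i} {Z : Zone} {D : Ty d} :
      Sub Z (fvec A) s1 → DW cuts strong s1 false d D →
      Sub Z (bvec (.amp A B)) s2 → AtMostOne s2 false → Ok strong s2 false d D →
      DW cuts strong s2 false d D
  | ampL2 {i d : ℕ} {s1 s2 : BConfig} {A B : Ty i} {Z : Zone} {D : Ty d} :
      Sub Z (fvec B) s1 → DW cuts strong s1 false d D →
      Sub Z (bvec (.amp A B)) s2 → AtMostOne s2 false → Ok strong s2 false d D →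
      DW cuts strong s2 false d D
  -- synchronous right rules (succedent focalised)
  | prodR {i j : ℕ} {Γ1 Γ2 : BConfig} {A : Ty i} {B : Ty j} :
      DW cuts strong Γ1 (posb A) i A → DW cuts strong Γ2 (posb B) j B →
      AtMostOne (Γ1 ++ Γ2) true → Ok strong (Γ1 ++ Γ2) true (i + j) (.prod A B) →
      DW cuts strong (Γ1 ++ Γ2) true (i + j) (.prod A B)
  | unitIR : DW cuts strong [] true 0 .unitI
  | wprodR {i j : ℕ} (k : ℕ) (hk : 1 ≤ k ∧ k ≤ i + 1) {Γ1 Γ2 w : BConfig}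
      {A : Ty (i + 1)} {B : Ty j} :
      DW cuts strong Γ1 (posb A) (i + 1) A → DW cuts strong Γ2 (posb B) j B →
      Wrap Γ1 k Γ2 w →
      AtMostOne w true → Ok strong w true (i + j) (.wprod k hk A B) →
      DW cuts strong w true (i + j) (.wprod k hk A B)
  | unitJR : DW cuts strong [BTree.sep] true 1 .unitJ
  | oplusR1 {i : ℕ} {Γ : BConfig} {A B : Ty i} :
      DW cuts strong Γ (posb A) i A →
      AtMostOne Γ true → Ok strong Γ true i (.oplus A B) →
      DW cuts strong Γ true i (.oplus A B)
  | oplusR2 {i : ℕ} {Γ : BConfig} {A B : Ty i} :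
      DW cuts strong Γ (posb B) i B →
      AtMostOne Γ true → Ok strong Γ true i (.oplus A B) →
      DW cuts strong Γ true i (.oplus A B)
  -- Cut rules (weakly focalised calculus only)
  | pcut1 {j d : ℕ} {f : Bool} {Γ s1 s2 : BConfig} {P : Ty j} {Z : Zone} {C : Ty d} :
      cuts = true → posb P = true →
      DW cuts strong Γ true j P →
      Sub Z (vec P) s1 → DW cuts strong s1 f d C →
      Sub Z Γ s2 → AtMostOne s2 f →
      DW cuts strong s2 f d C
  | pcut2 {j d : ℕ} {Γ s1 s2 : BConfig} {N : Ty j} {Z : Zone} {C : Ty d} :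
      cuts = true → posb N = false →
      DW cuts strong Γ false j N →
      Sub Z (bvec N) s1 → DW cuts strong s1 false d C →
      Sub Z Γ s2 → AtMostOne s2 false →
      DW cuts strong s2 false d C
  | ncut1 {j d : ℕ} {Γ s1 s2 : BConfig} {P : Ty j} {Z : Zone} {C : Ty d} :
      cuts = true → posb P = true →
      DW cuts strong Γ false j P →
      Sub Z (vec P) s1 → CBoxes s1 0 → DW cuts strong s1 false d C →
      Sub Z Γ s2 → AtMostOne s2 false →
      DW cuts strong s2 false d C
  | ncut2 {j d : ℕ} {f : Bool} {Γ s1 s2 : BConfig} {N : Ty j} {Z : Zone} {C : Ty d} :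
      cuts = true → posb N = false →
      CBoxes Γ 0 → DW cuts strong Γ false j N →
      Sub Z (vec N) s1 → DW cuts strong s1 f d C →
      Sub Z Γ s2 → AtMostOne s2 f →
      DW cuts strong s2 f d C

/-- The weakly focalised calculus DAf. -/
abbrev DAf (Δ : BConfig) (f : Bool) (i : ℕ) (A : Ty i) : Prop := DW true false Δ f i A

/-- Cut-free DAf. -/
abbrev DAfCutFree (Δ : BConfig) (f : Bool) (i : ℕ) (A : Ty i) : Prop := DW false false Δ f i A

/-- The strongly focalised calculus DAFoc. -/
abbrev DAFoc (Δ : BConfig) (f : Bool) (i : ℕ) (A : Ty i) : Prop := DW false true Δ f i A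

/-- Transport of a type along an equality of sorts. -/
def tcast {i j : ℕ} (h : i = j) (A : Ty i) : Ty j := h ▸ A

end DA

namespace DA

theorem okF {Δ : BConfig} {f : Bool} {i : ℕ} {A : Ty i} : Ok false Δ f i A :=
  fun h => Bool.noConfusion h

theorem ampR_inv_aux {Δ : BConfig} {f : Bool} {i : ℕ} {C : Ty i}
    (h : DW true false Δ f i C) :
    ∀ A B : Ty i, C = Ty.amp A B → f = false →
      DW true false Δ false i A ∧ DW true false Δ false i B := by
  induction h with
  | idP name i => intro A B hC hf; exact absurd hC (by simp)
  | idQ name i => intro A B hC hf; exact absurd hC (by simp)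
  | focR hp h1 hamo hok ih =>
      intro A B hC hf; subst hC; simp [posb] at hp
  | focL hq hs1 h1 hs2 hamo hok ih =>
      intro A B hC hf
      obtain ⟨ha, hb⟩ := ih A B hC rfl
      exact ⟨.focL hq hs1 ha hs2 hamo okF, .focL hq hs1 hb hs2 hamo okF⟩
  | overR h1 hamo hok ih => intro A B hC hf; exact absurd hC (by simp)
  | underR h1 hamo hok ih => intro A B hC hf; exact absurd hC (by simp)
  | circR k hk hw h1 hamo hok ih => intro A B hC hf; exact absurd hC (by simp)
  | infxR k hk hw h1 hamo hok ih => intro A B hC hf; exact absurd hC (by simp)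
  | ampR h1 h2 hamo hok ih1 ih2 =>
      intro A B hC hf
      injection hC with _ hA hB
      subst hA; subst hB
      exact ⟨h1, h2⟩
  | prodL hs1 h1 hs2 hamo hok ih =>
      intro A B hC hf; subst hf
      obtain ⟨ha, hb⟩ := ih A B hC rfl
      exact ⟨.prodL hs1 ha hs2 hamo okF, .prodL hs1 hb hs2 hamo okF⟩
  | unitIL hs1 h1 hs2 hamo hok ih =>
      intro A B hC hf; subst hf
      obtain ⟨ha, hb⟩ := ih A B hC rfl
      exact ⟨.unitIL hs1 ha hs2 hamo okF, .unitIL hs1 hb hs2 hamo okF⟩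
  | wprodL k hk hw hs1 h1 hs2 hamo hok ih =>
      intro A B hC hf; subst hf
      obtain ⟨ha, hb⟩ := ih A B hC rfl
      exact ⟨.wprodL k hk hw hs1 ha hs2 hamo okF, .wprodL k hk hw hs1 hb hs2 hamo okF⟩
  | unitJL hs1 h1 hs2 hamo hok ih =>
      intro A B hC hf; subst hf
      obtain ⟨ha, hb⟩ := ih A B hC rfl
      exact ⟨.unitJL hs1 ha hs2 hamo okF, .unitJL hs1 hb hs2 hamo okF⟩
  | oplusL hs1 h1 hs2 h2 hs3 hamo hok ih1 ih2 =>
      intro A B hC hf; subst hf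
      obtain ⟨ha1, hb1⟩ := ih1 A B hC rfl
      obtain ⟨ha2, hb2⟩ := ih2 A B hC rfl
      exact ⟨.oplusL hs1 ha1 hs2 ha2 hs3 hamo okF, .oplusL hs1 hb1 hs2 hb2 hs3 hamo okF⟩
  | overL h0 hs1 h1 hs2 hamo hok ih0 ih =>
      intro A B hC hf
      obtain ⟨ha, hb⟩ := ih A B hC rfl
      exact ⟨.overL h0 hs1 ha hs2 hamo okF, .overL h0 hs1 hb hs2 hamo okF⟩
  | underL h0 hs1 h1 hs2 hamo hok ih0 ih =>
      intro A B hC hf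
      obtain ⟨ha, hb⟩ := ih A B hC rfl
      exact ⟨.underL h0 hs1 ha hs2 hamo okF, .underL h0 hs1 hb hs2 hamo okF⟩
  | circL k hk h0 hs1 h1 hw hs2 hamo hok ih0 ih =>
      intro A B hC hf
      obtain ⟨ha, hb⟩ := ih A B hC rfl
      exact ⟨.circL k hk h0 hs1 ha hw hs2 hamo okF, .circL k hk h0 hs1 hb hw hs2 hamo okF⟩
  | infxL k hk h0 hs1 h1 hw hs2 hamo hok ih0 ih =>
      intro A B hC hf
      obtain ⟨ha, hb⟩ := ih A B hC rfl
      exact ⟨.infxL k hk h0 hs1 ha hw hs2 hamo okF, .infxL k hk h0 hs1 hb hw hs2 hamo okF⟩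
  | ampL1 hs1 h1 hs2 hamo hok ih =>
      intro A B hC hf
      obtain ⟨ha, hb⟩ := ih A B hC rfl
      exact ⟨.ampL1 hs1 ha hs2 hamo okF, .ampL1 hs1 hb hs2 hamo okF⟩
  | ampL2 hs1 h1 hs2 hamo hok ih =>
      intro A B hC hf
      obtain ⟨ha, hb⟩ := ih A B hC rfl
      exact ⟨.ampL2 hs1 ha hs2 hamo okF, .ampL2 hs1 hb hs2 hamo okF⟩
  | prodR h1 h2 hamo hok ih1 ih2 => intro A B hC hf; exact absurd hf (by simp)
  | unitIR => intro A B hC hf; exact absurd hf (by simp)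
  | wprodR k hk h1 h2 hw hamo hok ih1 ih2 => intro A B hC hf; exact absurd hf (by simp)
  | unitJR => intro A B hC hf; exact absurd hf (by simp)
  | oplusR1 h1 hamo hok ih => intro A B hC hf; exact absurd hf (by simp)
  | oplusR2 h1 hamo hok ih => intro A B hC hf; exact absurd hf (by simp)
  | pcut1 hc hp h0 hs1 h1 hs2 hamo ih0 ih =>
      intro A B hC hf; subst hf
      obtain ⟨ha, hb⟩ := ih A B hC rfl
      exact ⟨.pcut1 hc hp h0 hs1 ha hs2 hamo, .pcut1 hc hp h0 hs1 hb hs2 hamo⟩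
  | pcut2 hc hp h0 hs1 h1 hs2 hamo ih0 ih =>
      intro A B hC hf
      obtain ⟨ha, hb⟩ := ih A B hC rfl
      exact ⟨.pcut2 hc hp h0 hs1 ha hs2 hamo, .pcut2 hc hp h0 hs1 hb hs2 hamo⟩
  | ncut1 hc hp h0 hs1 hbx h1 hs2 hamo ih0 ih =>
      intro A B hC hf
      obtain ⟨ha, hb⟩ := ih A B hC rfl
      exact ⟨.ncut1 hc hp h0 hs1 hbx ha hs2 hamo, .ncut1 hc hp h0 hs1 hbx hb hs2 hamo⟩
  | ncut2 hc hp hbx h0 hs1 h1 hs2 hamo ih0 ih =>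
      intro A B hC hf; subst hf
      obtain ⟨ha, hb⟩ := ih A B hC rfl
      exact ⟨.ncut2 hc hp hbx h0 hs1 ha hs2 hamo, .ncut2 hc hp hbx h0 hs1 hb hs2 hamo⟩

/-- Invertibility of `&R` in DAf: for all types `A`, `B` of equal sort and
any configuration `Δ`, if the unfocused sequent `Δ ⊢w A & B` is derivable in
DAf then both `Δ ⊢w A` and `Δ ⊢w B` are derivable in DAf. -/
theorem ampR_invertible :
    ∀ (i : ℕ) (A B : Ty i) (Δ : BConfig),
      CBoxes Δ 0 →
      DAf Δ false i (Ty.amp A B) →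
      DAf Δ false i A ∧ DAf Δ false i B := by
  intro i A B Δ _ h
  exact ampR_inv_aux h A B rfl rfl

end DA
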